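/- Let T be an intrinsic operator and X an initial space with T : X → H_v bounded. For N ∈ ℕ set D_N = {z ∈ D : ||T* K_z||_{X*} > N}. If lim_{N→∞} sup_{z∈D_N} v(z)·||T* K_z||_{X*} = 0, then T : X → H_v is compact. -/

import Mathlib

open Metric Filter Topology

/-- The open unit disk in the complex plane. -/
def UnitDisk : Set ℂ := Metric.ball (0 : ℂ) 1

/-- The filter of `z` in the plane with `|z| → 1⁻`, used to express boundary limits. -/
noncomputable def bdryFilter : Filter ℂ := Filter.comap (fun z : ℂ => ‖z‖) (nhdsWithin 1 (Set.Iio 1))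

/-! The hypothesis on `D_N` says that `v z * ‖T* K_z‖ → 0` as `|z| → 1`: where `‖T* K_z‖ > N`
this is the hypothesis, elsewhere the product is at most `N · v z`. Given a sequence `u` in the
unit ball of `X`, a subsequence converges locally uniformly to some `f` in the ball, and the
intrinsic operator `T` preserves this convergence. The weighted norm of `S (u_k - f)` is then small
on a disk `|z| ≤ r` by uniform convergence, and on the annulus `r < |z| < 1` because there
`v z * |S (u_k - f) z| ≤ 2 v z ‖T* K_z‖`. -/

theorem eventually_bdryFilter_iff {p : ℂ → Prop} :
    (∀ᶠ z in bdryFilter, p z) ↔ ∃ r < 1, ∀ z : ℂ, r < ‖z‖ → ‖z‖ < 1 → p z := by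
  rw [bdryFilter, eventually_comap, Filter.Eventually, mem_nhdsLT_iff_exists_Ioo_subset]
  constructor
  · rintro ⟨r, hr, hsub⟩
    exact ⟨r, hr, fun z h1 h2 => hsub ⟨h1, h2⟩ z rfl⟩
  · rintro ⟨r, hr, h⟩
    exact ⟨r, hr, fun b hb z hz => by subst hz; exact h z hb.1 hb.2⟩

theorem eventually_mem_unitDisk_bdryFilter : ∀ᶠ z in bdryFilter, z ∈ UnitDisk :=
  eventually_bdryFilter_iff.2 ⟨0, one_pos, fun _ _ hz => mem_ball_zero_iff.2 hz⟩

theorem exists_forall_lt_of_tendsto_sSup_image {α : Type*} {f A : α → ℝ} {s : Set α}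
    (hbdd : BddAbove (f '' s))
    (hlim : Tendsto (fun N : ℕ => sSup (f '' {z ∈ s | (N : ℝ) < A z})) atTop (𝓝 0))
    {c : ℝ} (hc : 0 < c) : ∃ N : ℕ, ∀ z ∈ s, (N : ℝ) < A z → f z < c := by
  obtain ⟨N, hN⟩ := (hlim.eventually (gt_mem_nhds hc)).exists
  have hbddN : BddAbove (f '' {z ∈ s | (N : ℝ) < A z}) :=
    hbdd.mono (Set.image_mono fun _ hz => hz.1)
  exact ⟨N, fun z hz hAz => (le_csSup hbddN (Set.mem_image_of_mem f ⟨hz, hAz⟩)).trans_lt hN⟩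

theorem mul_norm_comp_le {𝕜 E F : Type*} [RCLike 𝕜] [SeminormedAddCommGroup E]
    [NormedSpace 𝕜 E] [SeminormedAddCommGroup F] [NormedSpace 𝕜 F]
    {c : ℝ} (hc : 0 ≤ c) (L : F →L[𝕜] 𝕜) (hL : ∀ g, c * ‖L g‖ ≤ ‖g‖) (S : E →L[𝕜] F) :
    c * ‖L.comp S‖ ≤ ‖S‖ := by
  have hcL : ‖(c : 𝕜) • L‖ ≤ 1 := by
    refine ContinuousLinearMap.opNorm_le_bound _ zero_le_one fun g => ?_
    simpa [norm_smul, abs_of_nonneg hc] using hL g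
  calc c * ‖L.comp S‖ = ‖((c : 𝕜) • L).comp S‖ := by
        rw [ContinuousLinearMap.smul_comp, norm_smul, RCLike.norm_ofReal, abs_of_nonneg hc]
    _ ≤ ‖(c : 𝕜) • L‖ * ‖S‖ := ContinuousLinearMap.opNorm_comp_le _ _
    _ ≤ ‖S‖ := mul_le_of_le_one_left (norm_nonneg S) hcL

theorem isSeqCompact_closure_image_of_forall_tendsto_subseq {α β : Type*}
    [PseudoMetricSpace β] {f : α → β} {s : Set α}
    (h : ∀ u : ℕ → α, (∀ n, u n ∈ s) →
      ∃ g, ∃ φ : ℕ → ℕ, StrictMono φ ∧ Tendsto (f ∘ u ∘ φ) atTop (𝓝 g)) :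
    IsSeqCompact (closure (f '' s)) := by
  intro x hx
  have happrox : ∀ n : ℕ, ∃ w ∈ s, dist (x n) (f w) < 1 / (n + 1) := fun n => by
    obtain ⟨_, ⟨w, hw, rfl⟩, hd⟩ := Metric.mem_closure_iff.1 (hx n) _ Nat.one_div_pos_of_nat
    exact ⟨w, hw, hd⟩
  choose w hws hwd using happrox
  obtain ⟨g, φ, hφ, hg⟩ := h w hws
  refine ⟨g, mem_closure_of_tendsto hg (.of_forall fun k => Set.mem_image_of_mem f (hws (φ k))),
    φ, hφ, ?_⟩
  refine tendsto_iff_dist_tendsto_zero.2 (squeeze_zero (fun _ => dist_nonneg)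
    (fun k => (dist_triangle _ (f (w (φ k))) g).trans (add_le_add_left (hwd (φ k)).le _)) ?_)
  simpa using (tendsto_one_div_add_atTop_nhds_zero_nat.comp hφ.tendsto_atTop).add
    (tendsto_iff_dist_tendsto_zero.1 hg)

theorem isCompactOperator_of_forall_tendsto_subseq {E F : Type*}
    [SeminormedAddCommGroup E] [MetricSpace F] (f : E → F)
    (h : ∀ u : ℕ → E, (∀ n, ‖u n‖ ≤ 1) →
      ∃ g, ∃ φ : ℕ → ℕ, StrictMono φ ∧ Tendsto (f ∘ u ∘ φ) atTop (𝓝 g)) :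
    IsCompactOperator f :=
  (isCompactOperator_iff_exists_mem_nhds_isCompact_closure_image f).2
    ⟨closedBall 0 1, closedBall_mem_nhds _ one_pos,
      (isSeqCompact_closure_image_of_forall_tendsto_subseq fun u hu =>
        h u fun n => mem_closedBall_zero_iff.1 (hu n)).isCompact⟩

section WeightedSpace

variable {X Hv : Type*} [NormedAddCommGroup X] [NormedSpace ℂ X]
  [NormedAddCommGroup Hv] [NormedSpace ℂ Hv] {v : ℂ → ℝ} {K : ℂ → Hv →L[ℂ] ℂ}

theorem tendsto_weight_mul_norm_comp_bdryFilter (hv_pos : ∀ z ∈ UnitDisk, 0 < v z)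
    (hv_lim : Tendsto v bdryFilter (𝓝 0))
    (hK_le : ∀ g : Hv, ∀ z ∈ UnitDisk, v z * ‖K z g‖ ≤ ‖g‖) (S : X →L[ℂ] Hv)
    (hlim : Tendsto (fun N : ℕ => sSup ((fun z => v z * ‖(K z).comp S‖) ''
        {z ∈ UnitDisk | (N : ℝ) < ‖(K z).comp S‖})) atTop (𝓝 0)) :
    Tendsto (fun z => v z * ‖(K z).comp S‖) bdryFilter (𝓝 0) := by
  have hbdd : ∀ z ∈ UnitDisk, v z * ‖(K z).comp S‖ ≤ ‖S‖ := fun z hz =>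
    mul_norm_comp_le (hv_pos z hz).le _ (fun g => hK_le g z hz) S
  refine tendsto_order.2 ⟨fun a ha => ?_, fun c hc => ?_⟩
  · filter_upwards [eventually_mem_unitDisk_bdryFilter] with z hz
    exact ha.trans_le (mul_nonneg (hv_pos z hz).le (norm_nonneg _))
  obtain ⟨N, hN⟩ :=
    exists_forall_lt_of_tendsto_sSup_image ⟨‖S‖, Set.forall_mem_image.2 hbdd⟩ hlim hc
  have hN1 : (0 : ℝ) < N + 1 := by positivity
  filter_upwards [eventually_mem_unitDisk_bdryFilter,
    hv_lim.eventually (gt_mem_nhds (div_pos hc hN1))] with z hz hvz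
  rcases lt_or_ge (N : ℝ) ‖(K z).comp S‖ with hA | hA
  · exact hN z hz hA
  · calc v z * ‖(K z).comp S‖ ≤ v z * (N + 1) :=
          mul_le_mul_of_nonneg_left (by linarith) (hv_pos z hz).le
      _ < c := (lt_div_iff₀ hN1).1 hvz

theorem tendsto_apply_of_tendstoLocallyUniformlyOn (hv_nonneg : ∀ z ∈ UnitDisk, 0 ≤ v z)
    (hv_le_one : ∀ z ∈ UnitDisk, v z ≤ 1)
    (hnorm : ∀ (g : Hv) (C : ℝ), 0 ≤ C → (∀ z ∈ UnitDisk, v z * ‖K z g‖ ≤ C) → ‖g‖ ≤ C)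
    {S : X →L[ℂ] Hv} (hw : Tendsto (fun z => v z * ‖(K z).comp S‖) bdryFilter (𝓝 0))
    {x : ℕ → X} {f : X} {M : ℝ} (hM : ∀ k, ‖x k - f‖ ≤ M)
    (hloc : TendstoLocallyUniformlyOn (fun k z => K z (S (x k))) (fun z => K z (S f))
      atTop UnitDisk) :
    Tendsto (fun k => S (x k)) atTop (𝓝 (S f)) := by
  refine nhds_basis_closedBall.tendsto_right_iff.2 fun ε hε => ?_
  have hM0 : 0 ≤ M := (norm_nonneg _).trans (hM 0)
  have hc : 0 < ε / (M + 1) := by positivity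
  obtain ⟨r, hr1, hr⟩ := eventually_bdryFilter_iff.1 (hw.eventually (gt_mem_nhds hc))
  have hunif := (tendstoLocallyUniformlyOn_iff_tendstoUniformlyOn_of_compact
    (isCompact_closedBall 0 r)).1 (hloc.mono (closedBall_subset_ball hr1))
  filter_upwards [Metric.tendstoUniformlyOn_iff.1 hunif ε hε] with k hk
  rw [mem_closedBall, dist_eq_norm, ← map_sub]
  refine hnorm _ ε hε.le fun z hz => ?_
  rcases le_or_gt ‖z‖ r with hzr | hzr
  · have hclose : ‖K z (S (x k - f))‖ ≤ ε := by
      rw [map_sub, map_sub, ← dist_eq_norm, dist_comm]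
      exact (hk z (mem_closedBall_zero_iff.2 hzr)).le
    simpa using mul_le_mul (hv_le_one z hz) hclose (norm_nonneg _) zero_le_one
  · calc v z * ‖K z (S (x k - f))‖ ≤ v z * ‖(K z).comp S‖ * ‖x k - f‖ := by
          rw [mul_assoc]
          exact mul_le_mul_of_nonneg_left (((K z).comp S).le_opNorm _) (hv_nonneg z hz)
      _ ≤ ε / (M + 1) * M :=
          mul_le_mul (hr z hzr (mem_ball_zero_iff.1 hz)).le (hM k) (norm_nonneg _) hc.le
      _ ≤ ε := by
          rw [div_mul_eq_mul_div, div_le_iff₀ (by positivity)]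
          exact mul_le_mul_of_nonneg_left (le_add_of_nonneg_right zero_le_one) hε.le

end WeightedSpace

theorem stmt_17_general {X Hv : Type*}
    [NormedAddCommGroup X] [NormedSpace ℂ X]
    [NormedAddCommGroup Hv] [NormedSpace ℂ Hv]
    (v : ℂ → ℝ)
    (hv_pos : ∀ z ∈ UnitDisk, 0 < v z)
    (hv_le1 : ∀ z ∈ UnitDisk, v z ≤ 1)
    (hv_lim : Tendsto v bdryFilter (nhds 0))
    (ιX : X →ₗ[ℂ] (ℂ → ℂ))
    (hιX_hol : ∀ f : X, DifferentiableOn ℂ (ιX f) UnitDisk)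
    (hX_ball : ∀ u : ℕ → X, (∀ n, ‖u n‖ ≤ 1) →
      ∃ (f : X) (σ : ℕ → ℕ), StrictMono σ ∧ ‖f‖ ≤ 1 ∧
        TendstoLocallyUniformlyOn (fun k => ιX (u (σ k))) (ιX f) atTop UnitDisk)
    (j : Hv →ₗ[ℂ] (ℂ → ℂ))
    (hj_le : ∀ (g : Hv), ∀ z ∈ UnitDisk, v z * ‖j g z‖ ≤ ‖g‖)
    (hj_norm : ∀ (g : Hv) (C : ℝ), 0 ≤ C → (∀ z ∈ UnitDisk, v z * ‖j g z‖ ≤ C) → ‖g‖ ≤ C)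
    (K : ℂ → (Hv →L[ℂ] ℂ)) (hK : ∀ z ∈ UnitDisk, ∀ g : Hv, K z g = j g z)
    (T : (ℂ → ℂ) →ₗ[ℂ] (ℂ → ℂ))
    (hT_intr : ∀ (F : ℕ → (ℂ → ℂ)) (f : ℂ → ℂ),
      (∀ n, DifferentiableOn ℂ (F n) UnitDisk) → DifferentiableOn ℂ f UnitDisk →
      TendstoLocallyUniformlyOn F f atTop UnitDisk →
      TendstoLocallyUniformlyOn (fun n => T (F n)) (T f) atTop UnitDisk)
    (S : X →L[ℂ] Hv) (hS : ∀ f : X, ∀ z ∈ UnitDisk, j (S f) z = T (ιX f) z)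
    (hlim : Tendsto (fun N : ℕ => sSup ((fun z => v z * ‖(K z).comp S‖) ''
        {z ∈ UnitDisk | (N : ℝ) < ‖(K z).comp S‖})) atTop (nhds 0)) :
    IsCompactOperator S := by
  have hK_le : ∀ g : Hv, ∀ z ∈ UnitDisk, v z * ‖K z g‖ ≤ ‖g‖ := fun g z hz =>
    hK z hz g ▸ hj_le g z hz
  have hK_norm : ∀ (g : Hv) (C : ℝ), 0 ≤ C → (∀ z ∈ UnitDisk, v z * ‖K z g‖ ≤ C) → ‖g‖ ≤ C :=
    fun g C hC h => hj_norm g C hC fun z hz => hK z hz g ▸ h z hz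
  have hT_eq : ∀ x : X, Set.EqOn (T (ιX x)) (fun z => K z (S x)) UnitDisk := fun x z hz => by
    simp only [hK z hz, hS x z hz]
  have hw := tendsto_weight_mul_norm_comp_bdryFilter hv_pos hv_lim hK_le S hlim
  refine isCompactOperator_of_forall_tendsto_subseq S fun u hu => ?_
  obtain ⟨f, σ, hσ, hf, hloc⟩ := hX_ball u hu
  have hTloc := ((hT_intr _ _ (fun k => hιX_hol _) (hιX_hol f) hloc).congr
    fun k => hT_eq (u (σ k))).congr_right (hT_eq f)
  exact ⟨S f, σ, hσ, tendsto_apply_of_tendstoLocallyUniformlyOn (fun z hz => (hv_pos z hz).le)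
    hv_le1 hK_norm hw (fun k => (norm_sub_le _ _).trans (add_le_add (hu _) hf)) hTloc⟩

/-- Let `T` be an intrinsic operator and `X` an initial space with
`T : X → H_v` bounded (realized by `S : X →L[ℂ] Hv`).  For `N ∈ ℕ` set
`D_N = {z ∈ 𝔻 : ‖T* K_z‖_{X*} > N}`.  If
`lim_{N → ∞} sup_{z ∈ D_N} v z * ‖T* K_z‖_{X*} = 0` (the supremum over an empty set being
`0 = sSup ∅`), then `T : X → H_v` is compact. -/
theorem stmt_17 {X Hv : Type*}
    [NormedAddCommGroup X] [NormedSpace ℂ X] [CompleteSpace X]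
    [NormedAddCommGroup Hv] [NormedSpace ℂ Hv] [CompleteSpace Hv]
    (v : ℂ → ℝ)
    (hv_cont : ContinuousOn v UnitDisk)
    (hv_pos : ∀ z ∈ UnitDisk, 0 < v z)
    (hv_le1 : ∀ z ∈ UnitDisk, v z ≤ 1)
    (hv_rad : ∀ z ∈ UnitDisk, ∀ w ∈ UnitDisk, ‖z‖ = ‖w‖ → v z = v w)
    (hv_mono : ∀ z ∈ UnitDisk, ∀ w ∈ UnitDisk, ‖z‖ ≤ ‖w‖ → v w ≤ v z)
    (hv_lim : Tendsto v bdryFilter (nhds 0))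
    (ιX : X →ₗ[ℂ] (ℂ → ℂ)) (hιX_inj : Function.Injective ιX)
    (hιX_hol : ∀ f : X, DifferentiableOn ℂ (ιX f) UnitDisk)
    (hX_poly : ∀ q : Polynomial ℂ, ∃ f : X, ∀ z ∈ UnitDisk, ιX f z = q.eval z)
    (hX_ball : ∀ u : ℕ → X, (∀ n, ‖u n‖ ≤ 1) →
      ∃ (f : X) (σ : ℕ → ℕ), StrictMono σ ∧ ‖f‖ ≤ 1 ∧
        TendstoLocallyUniformlyOn (fun k => ιX (u (σ k))) (ιX f) atTop UnitDisk)
    (j : Hv →ₗ[ℂ] (ℂ → ℂ)) (hj_inj : Function.Injective j)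
    (hj_hol : ∀ g : Hv, DifferentiableOn ℂ (j g) UnitDisk)
    (hj_le : ∀ (g : Hv), ∀ z ∈ UnitDisk, v z * ‖j g z‖ ≤ ‖g‖)
    (hj_norm : ∀ (g : Hv) (C : ℝ), 0 ≤ C → (∀ z ∈ UnitDisk, v z * ‖j g z‖ ≤ C) → ‖g‖ ≤ C)
    (hj_surj : ∀ f : ℂ → ℂ, DifferentiableOn ℂ f UnitDisk →
      (∃ C : ℝ, ∀ z ∈ UnitDisk, v z * ‖f z‖ ≤ C) → ∃ g : Hv, ∀ z ∈ UnitDisk, j g z = f z)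
    (K : ℂ → (Hv →L[ℂ] ℂ)) (hK : ∀ z ∈ UnitDisk, ∀ g : Hv, K z g = j g z)
    (T : (ℂ → ℂ) →ₗ[ℂ] (ℂ → ℂ))
    (hT_hol : ∀ f : ℂ → ℂ, DifferentiableOn ℂ f UnitDisk →
      DifferentiableOn ℂ (T f) UnitDisk)
    (hT_intr : ∀ (F : ℕ → (ℂ → ℂ)) (f : ℂ → ℂ),
      (∀ n, DifferentiableOn ℂ (F n) UnitDisk) → DifferentiableOn ℂ f UnitDisk →
      TendstoLocallyUniformlyOn F f atTop UnitDisk →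
      TendstoLocallyUniformlyOn (fun n => T (F n)) (T f) atTop UnitDisk)
    (S : X →L[ℂ] Hv) (hS : ∀ f : X, ∀ z ∈ UnitDisk, j (S f) z = T (ιX f) z)
    (hlim : Tendsto (fun N : ℕ => sSup ((fun z => v z * ‖(K z).comp S‖) ''
        {z ∈ UnitDisk | (N : ℝ) < ‖(K z).comp S‖})) atTop (nhds 0)) :
    IsCompactOperator S :=
  stmt_17_general v hv_pos hv_le1 hv_lim ιX hιX_hol hX_ball j hj_le hj_norm K hK T hT_intr S hS hlim
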